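/- Let h_d, h_c, h_r, h_sr > 0 and P > 0 with h_r² ≤ min(h_d², h_c²) and h_c² ≤ h_d². If R_A^IC ≤ R_B^IC, then R̄_sym − R_A^IC ≤ 3/2 + C(h_sr²/h_c²). -/

import Mathlib

/-- `C(x) = (1/2) * log₂(1 + x)`. -/
noncomputable def Cfun (x : ℝ) : ℝ := (1 / 2) * Real.logb 2 (1 + x)

/-- Genie-aided sum-rate upper bound `R̄_S1` for the symmetric IC-FDR. -/
noncomputable def RbarS1 (hd hc hr hsr P : ℝ) : ℝ :=
  Cfun (P * (hd ^ 2 + hc ^ 2 + hr ^ 2 + 2 * hr * Real.sqrt (hd ^ 2 + hc ^ 2)))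
    + Cfun (hd ^ 2 * P / (1 + max (hc ^ 2) (hsr ^ 2) * P))
    + Cfun (hsr ^ 2 / hc ^ 2)

/-- `Θ₁₂` (and, with arguments swapped, `Θ₂₁`) with `σ² = h_c²/(h_c² + h_sr²)`. -/
noncomputable def Theta (hd hc hr hsr P1 ρ1 P2 ρ2 Pr : ℝ) : ℝ :=
  hc ^ 2 * P1 + hr ^ 2 * (1 - ρ2 ^ 2) * Pr + 2 * hc * hr * ρ1 * Real.sqrt (P1 * Pr)
    + (hc ^ 2 / (hc ^ 2 + hsr ^ 2)) * (hd * Real.sqrt P2 + hr * ρ2 * Real.sqrt Pr) ^ 2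
        / (hc ^ 2 / (hc ^ 2 + hsr ^ 2) + hc ^ 2 * P2)

/-- Genie-aided sum-rate upper bound `R̄_S2` for the symmetric IC-FDR. -/
noncomputable def RbarS2 (hd hc hr hsr P : ℝ) : ℝ :=
  sSup {y : ℝ | ∃ P1 P2 Pr ρ1 ρ2 : ℝ,
    P1 ∈ Set.Icc 0 P ∧ P2 ∈ Set.Icc 0 P ∧ Pr ∈ Set.Icc 0 P ∧ ρ1 ^ 2 + ρ2 ^ 2 ≤ 1 ∧
    y = Cfun (Theta hd hc hr hsr P1 ρ1 P2 ρ2 Pr)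
        + Cfun (Theta hd hc hr hsr P2 ρ2 P1 ρ1 Pr)
        + 2 * Cfun (hsr ^ 2 / hc ^ 2)}

/-- Cut-set individual-rate bound with Gaussian inputs. -/
noncomputable def Rind (hd hr P : ℝ) : ℝ := Cfun (P * (hd + hr) ^ 2)

/-- The minimum of the computable symmetric-rate upper bounds. -/
noncomputable def RbarSym (hd hc hr hsr P : ℝ) : ℝ :=
  min (min ((1 / 2) * RbarS1 hd hc hr hsr P) ((1 / 2) * RbarS2 hd hc hr hsr P))
    (Rind hd hr P)

/-- ETW Han–Kobayashi symmetric rate, weak interference, case A. -/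
noncomputable def RAIC (hd hc P : ℝ) : ℝ := Cfun (hc ^ 2 * P + hd ^ 2 / hc ^ 2) - 1 / 2

/-- ETW Han–Kobayashi symmetric rate, weak interference, case B. -/
noncomputable def RBIC (hd hc P : ℝ) : ℝ :=
  (1 / 2) * Cfun (hd ^ 2 * P + hc ^ 2 * P) + (1 / 2) * Cfun (hd ^ 2 / hc ^ 2) - 1 / 2

/-- ETW Han–Kobayashi symmetric rate, strong interference, case C. -/
noncomputable def RCIC (hd P : ℝ) : ℝ := Cfun (hd ^ 2 * P)

/-- ETW Han–Kobayashi symmetric rate, strong interference, case D. -/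
noncomputable def RDIC (hd hc P : ℝ) : ℝ := (1 / 2) * Cfun (hd ^ 2 * P + hc ^ 2 * P)

private lemma alg_nonneg (hc hr ρ1 ρ2 x y : ℝ) (hρ : ρ1 ^ 2 + ρ2 ^ 2 ≤ 1) :
    0 ≤ hc ^ 2 * x ^ 2 + hr ^ 2 * (1 - ρ2 ^ 2) * y ^ 2 + 2 * hc * hr * ρ1 * (x * y) := by
  nlinarith [sq_nonneg (hc * x + hr * ρ1 * y),
    mul_nonneg (mul_nonneg (sq_nonneg hr) (sq_nonneg y)) (by nlinarith [sq_nonneg ρ1] :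
      (0:ℝ) ≤ 1 - ρ2 ^ 2 - ρ1 ^ 2)]

private lemma T4_bound (hd hc hr ρ2 y z σ2 P : ℝ) (hhc : 0 < hc) (hσpos : 0 < σ2)
    (hσle : σ2 ≤ 1) (hrc : hr ^ 2 ≤ hc ^ 2) (hy2 : y ^ 2 ≤ P) :
    σ2 * (hd * z + hr * ρ2 * y) ^ 2 / (σ2 + hc ^ 2 * z ^ 2)
      ≤ 2 * (hd ^ 2 / hc ^ 2) + 2 * hc ^ 2 * ρ2 ^ 2 * P := by
  have hden : 0 < σ2 + hc ^ 2 * z ^ 2 := by positivity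
  rw [div_le_iff₀ hden]
  have hv : hc ^ 2 * (hd ^ 2 / hc ^ 2) = hd ^ 2 := by field_simp
  have hN : (hd * z + hr * ρ2 * y) ^ 2 ≤ 2 * hd ^ 2 * z ^ 2 + 2 * hr ^ 2 * ρ2 ^ 2 * y ^ 2 := by
    nlinarith [sq_nonneg (hd * z - hr * ρ2 * y)]
  have hstep : σ2 * (hd * z + hr * ρ2 * y) ^ 2
      ≤ σ2 * (2 * hd ^ 2 * z ^ 2 + 2 * hr ^ 2 * ρ2 ^ 2 * y ^ 2) :=
    mul_le_mul_of_nonneg_left hN hσpos.le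
  have hA : σ2 * (2 * hd ^ 2 * z ^ 2) ≤ 2 * (hd ^ 2 / hc ^ 2) * (hc ^ 2 * z ^ 2) := by
    have h' : 2 * (hd ^ 2 / hc ^ 2) * (hc ^ 2 * z ^ 2) = 2 * hd ^ 2 * z ^ 2 := by
      field_simp
    rw [h']
    nlinarith [mul_nonneg (sq_nonneg hd) (sq_nonneg z)]
  have hB : σ2 * (2 * hr ^ 2 * ρ2 ^ 2 * y ^ 2) ≤ 2 * hc ^ 2 * ρ2 ^ 2 * P * σ2 := by
    have h1 : hr ^ 2 * ρ2 ^ 2 * y ^ 2 ≤ hc ^ 2 * ρ2 ^ 2 * P := by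
      nlinarith [mul_nonneg (sq_nonneg ρ2) (sq_nonneg y), sq_nonneg ρ2,
        mul_nonneg (sq_nonneg hc) (sq_nonneg ρ2)]
    nlinarith [hσpos.le]
  have hpos1 : 0 ≤ 2 * (hd ^ 2 / hc ^ 2) * σ2 := mul_nonneg (by positivity) hσpos.le
  have hP0 : (0:ℝ) ≤ P := le_trans (sq_nonneg y) hy2
  have hpos2 : 0 ≤ 2 * hc ^ 2 * ρ2 ^ 2 * P * (hc ^ 2 * z ^ 2) :=
    mul_nonneg (mul_nonneg (mul_nonneg (by positivity) (sq_nonneg ρ2)) hP0) (by positivity)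
  nlinarith [hstep, hA, hB, hpos1, hpos2]

private lemma final_bound (hd hc hr ρ1 ρ2 x y w P T4 : ℝ)
    (hhc : 0 < hc) (hhr : 0 < hr) (hP : 0 < P) (hrc : hr ^ 2 ≤ hc ^ 2)
    (hx2 : x ^ 2 ≤ P) (hy2 : y ^ 2 ≤ P) (hρ2 : ρ2 ^ 2 ≤ 1) (hw0 : 0 ≤ w)
    (hwle : w ≤ 1 - ρ2 ^ 2 / 2) (hcross : ρ1 * (x * y) ≤ w * P)
    (hT4 : T4 ≤ 2 * (hd ^ 2 / hc ^ 2) + 2 * hc ^ 2 * ρ2 ^ 2 * P) :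
    hc ^ 2 * x ^ 2 + hr ^ 2 * (1 - ρ2 ^ 2) * y ^ 2 + 2 * hc * hr * ρ1 * (x * y) + T4
      ≤ 4 * (hc ^ 2 * P) + 2 * (hd ^ 2 / hc ^ 2) := by
  have hrchc : hr ≤ hc := by nlinarith
  have e1 : hc ^ 2 * x ^ 2 ≤ hc ^ 2 * P := by nlinarith [sq_nonneg hc]
  have e2 : hr ^ 2 * (1 - ρ2 ^ 2) * y ^ 2 ≤ hc ^ 2 * (1 - ρ2 ^ 2) * P := by
    have t1 : (0:ℝ) ≤ 1 - ρ2 ^ 2 := by linarith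
    have t2 : hr ^ 2 * ((1 - ρ2 ^ 2) * y ^ 2) ≤ hc ^ 2 * ((1 - ρ2 ^ 2) * y ^ 2) :=
      mul_le_mul_of_nonneg_right hrc (mul_nonneg t1 (sq_nonneg y))
    have t3 : (hc ^ 2 * (1 - ρ2 ^ 2)) * y ^ 2 ≤ (hc ^ 2 * (1 - ρ2 ^ 2)) * P :=
      mul_le_mul_of_nonneg_left hy2 (mul_nonneg (sq_nonneg hc) t1)
    nlinarith [t2, t3]
  have e3 : 2 * hc * hr * ρ1 * (x * y) ≤ 2 * hc ^ 2 * (w * P) := by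
    calc 2 * hc * hr * ρ1 * (x * y) = (2 * hc * hr) * (ρ1 * (x * y)) := by ring
      _ ≤ (2 * hc * hr) * (w * P) := mul_le_mul_of_nonneg_left hcross (by positivity)
      _ ≤ 2 * hc ^ 2 * (w * P) := by
          nlinarith [mul_nonneg hw0 hP.le, mul_nonneg hhc.le (mul_nonneg hw0 hP.le)]
  have e4 : 2 * hc ^ 2 * (w * P) ≤ 2 * hc ^ 2 * ((1 - ρ2 ^ 2 / 2) * P) := by
    have h' : w * P ≤ (1 - ρ2 ^ 2 / 2) * P := mul_le_mul_of_nonneg_right hwle hP.le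
    nlinarith [h']
  nlinarith [e1, e2, e3, e4, hT4]

lemma theta_bound (hd hc hr hsr P P1 ρ1 P2 ρ2 Pr : ℝ)
    (hhd : 0 < hd) (hhc : 0 < hc) (hhr : 0 < hr) (hhsr : 0 < hsr) (hP : 0 < P)
    (hrc : hr ^ 2 ≤ hc ^ 2)
    (h1 : P1 ∈ Set.Icc 0 P) (h2 : P2 ∈ Set.Icc 0 P) (h3 : Pr ∈ Set.Icc 0 P)
    (hρ : ρ1 ^ 2 + ρ2 ^ 2 ≤ 1) :
    0 ≤ Theta hd hc hr hsr P1 ρ1 P2 ρ2 Pr ∧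
      Theta hd hc hr hsr P1 ρ1 P2 ρ2 Pr ≤ 4 * (hc ^ 2 * P) + 2 * (hd ^ 2 / hc ^ 2) := by
  obtain ⟨hP1, hP1P⟩ := h1
  obtain ⟨hP2, hP2P⟩ := h2
  obtain ⟨hPr, hPrP⟩ := h3
  set x : ℝ := Real.sqrt P1 with hxd
  set y : ℝ := Real.sqrt Pr with hyd
  set z : ℝ := Real.sqrt P2 with hzd
  set w : ℝ := Real.sqrt (1 - ρ2 ^ 2) with hwd
  have hρ1sq : ρ1 ^ 2 ≤ 1 - ρ2 ^ 2 := by linarith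
  have hρ2sq : ρ2 ^ 2 ≤ 1 := by nlinarith [sq_nonneg ρ1]
  have hx0 : 0 ≤ x := Real.sqrt_nonneg _
  have hy0 : 0 ≤ y := Real.sqrt_nonneg _
  have hw0 : 0 ≤ w := Real.sqrt_nonneg _
  have hx2 : x ^ 2 = P1 := Real.sq_sqrt hP1
  have hy2 : y ^ 2 = Pr := Real.sq_sqrt hPr
  have hz2 : z ^ 2 = P2 := Real.sq_sqrt hP2
  have hxy : Real.sqrt (P1 * Pr) = x * y := Real.sqrt_mul hP1 Pr
  have hxyP : x * y ≤ P := by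
    calc x * y ≤ Real.sqrt P * Real.sqrt P :=
          mul_le_mul (Real.sqrt_le_sqrt hP1P) (Real.sqrt_le_sqrt hPrP) hy0 (Real.sqrt_nonneg _)
      _ = P := Real.mul_self_sqrt hP.le
  have habsw : |ρ1| ≤ w := by
    rw [hwd, ← Real.sqrt_sq_eq_abs]; exact Real.sqrt_le_sqrt hρ1sq
  have hwle : w ≤ 1 - ρ2 ^ 2 / 2 := by
    have h' : (1 - ρ2 ^ 2) ≤ (1 - ρ2 ^ 2 / 2) ^ 2 := by nlinarith [sq_nonneg (ρ2 ^ 2)]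
    calc w ≤ Real.sqrt ((1 - ρ2 ^ 2 / 2) ^ 2) := Real.sqrt_le_sqrt h'
      _ = 1 - ρ2 ^ 2 / 2 := Real.sqrt_sq (by linarith)
  have hcross : ρ1 * (x * y) ≤ w * P := by
    calc ρ1 * (x * y) ≤ |ρ1| * (x * y) :=
          mul_le_mul_of_nonneg_right (le_abs_self _) (mul_nonneg hx0 hy0)
      _ ≤ w * P := mul_le_mul habsw hxyP (mul_nonneg hx0 hy0) hw0
  set σ2 : ℝ := hc ^ 2 / (hc ^ 2 + hsr ^ 2) with hσdef
  have hσpos : 0 < σ2 := by positivity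
  have hσle : σ2 ≤ 1 := by
    rw [hσdef, div_le_one (by positivity)]; nlinarith [sq_nonneg hsr]
  have hΘ : Theta hd hc hr hsr P1 ρ1 P2 ρ2 Pr
      = hc ^ 2 * x ^ 2 + hr ^ 2 * (1 - ρ2 ^ 2) * y ^ 2 + 2 * hc * hr * ρ1 * (x * y)
        + σ2 * (hd * z + hr * ρ2 * y) ^ 2 / (σ2 + hc ^ 2 * z ^ 2) := by
    rw [Theta, hxy, hx2, hy2, hz2]
  have hden : 0 < σ2 + hc ^ 2 * z ^ 2 := by positivity
  have hT4nonneg : 0 ≤ σ2 * (hd * z + hr * ρ2 * y) ^ 2 / (σ2 + hc ^ 2 * z ^ 2) :=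
    div_nonneg (mul_nonneg hσpos.le (sq_nonneg _)) hden.le
  constructor
  · rw [hΘ]
    have := alg_nonneg hc hr ρ1 ρ2 x y hρ
    linarith
  · rw [hΘ]
    exact final_bound hd hc hr ρ1 ρ2 x y w P _ hhc hhr hP hrc (by rw [hx2]; exact hP1P)
      (by rw [hy2]; exact hPrP) hρ2sq hw0 hwle hcross
      (T4_bound hd hc hr ρ2 y z σ2 P hhc hσpos hσle hrc (by rw [hy2]; exact hPrP))

private lemma Cfun_nonneg {x : ℝ} (hx : 0 ≤ x) : 0 ≤ Cfun x :=
  mul_nonneg (by norm_num) (Real.logb_nonneg one_lt_two (by linarith))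

private lemma Cfun_le_of_bound {D t : ℝ} (hD : 0 ≤ D) (ht0 : 0 ≤ t) (ht : t ≤ 3 + 4 * D) :
    Cfun t ≤ Cfun D + 1 := by
  have h1 : (0:ℝ) < 1 + t := by linarith
  have h2 : 1 + t ≤ 4 * (1 + D) := by linarith
  have h3 : Real.logb 2 (1 + t) ≤ Real.logb 2 (4 * (1 + D)) :=
    Real.logb_le_logb_of_le one_lt_two h1 h2
  have h4 : Real.logb 2 (4 * (1 + D)) = Real.logb 2 4 + Real.logb 2 (1 + D) :=
    Real.logb_mul (by norm_num) (by positivity)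
  have h5 : Real.logb 2 4 = 2 := by
    rw [show (4:ℝ) = 2 * 2 by norm_num,
      Real.logb_mul (by norm_num) (by norm_num),
      Real.logb_self_eq_one (by norm_num)]
    norm_num
  rw [Cfun, Cfun]
  rw [h4, h5] at h3
  linarith

theorem stmt10 (hd hc hr hsr P : ℝ)
    (hhd : 0 < hd) (hhc : 0 < hc) (hhr : 0 < hr) (hhsr : 0 < hsr) (hP : 0 < P)
    (hweak : hr ^ 2 ≤ min (hd ^ 2) (hc ^ 2))
    (hcd : hc ^ 2 ≤ hd ^ 2) (hAB : RAIC hd hc P ≤ RBIC hd hc P) :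
    RbarSym hd hc hr hsr P - (RAIC hd hc P) ≤ 3 / 2 + Cfun (hsr ^ 2 / hc ^ 2) := by
  have hs0 : 0 ≤ Cfun (hsr ^ 2 / hc ^ 2) := Cfun_nonneg (by positivity)
  set D : ℝ := hc ^ 2 * P + hd ^ 2 / hc ^ 2 with hDdef
  have hD0 : 0 ≤ D := by positivity
  have hCD0 : 0 ≤ Cfun D := Cfun_nonneg hD0
  have hv0 : (0:ℝ) ≤ hd ^ 2 / hc ^ 2 := by positivity
  have hrc2 : hr ^ 2 ≤ hc ^ 2 := hweak.trans (min_le_right _ _)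
  have hsup : RbarS2 hd hc hr hsr P
      ≤ 2 * (Cfun D + 1) + 2 * Cfun (hsr ^ 2 / hc ^ 2) := by
    apply Real.sSup_le
    · rintro yv ⟨P1, P2, Pr, ρ1, ρ2, h1, h2, h3, hρ, rfl⟩
      have hρ' : ρ2 ^ 2 + ρ1 ^ 2 ≤ 1 := by linarith
      obtain ⟨n1, b1⟩ := theta_bound hd hc hr hsr P P1 ρ1 P2 ρ2 Pr
        hhd hhc hhr hhsr hP hrc2 h1 h2 h3 hρ
      obtain ⟨n2, b2⟩ := theta_bound hd hc hr hsr P P2 ρ2 P1 ρ1 Pr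
        hhd hhc hhr hhsr hP hrc2 h2 h1 h3 hρ'
      have c1 : Cfun (Theta hd hc hr hsr P1 ρ1 P2 ρ2 Pr) ≤ Cfun D + 1 :=
        Cfun_le_of_bound hD0 n1 (by rw [hDdef]; linarith)
      have c2 : Cfun (Theta hd hc hr hsr P2 ρ2 P1 ρ1 Pr) ≤ Cfun D + 1 :=
        Cfun_le_of_bound hD0 n2 (by rw [hDdef]; linarith)
      linarith
    · linarith
  have hmin : RbarSym hd hc hr hsr P ≤ (1 / 2) * RbarS2 hd hc hr hsr P :=
    (min_le_left _ _).trans (min_le_right _ _)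
  have hRA : RAIC hd hc P = Cfun D - 1 / 2 := by rw [RAIC, hDdef]
  rw [hRA]
  linarith
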